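/- Let p be prime and a, b, m, n, s ∈ {1,...,p-1} with a ≠ b, and suppose p-1 ≤ m+n+s < 2(p-1). Set M = m+n+s-(p-1). Then the sum over k from 0 to p-1 of (a+k)^m (b+k)^n k^s is congruent mod p to -∑_{j=0}^{M} C(m, M-j) C(n, j) a^(M-j) b^j. -/

import Mathlib

/-!
Over `𝔽_q`, `∑ₓ xᵗ` equals `-1` for `t = q - 1` and `0` for the other `0 < t < 2(q - 1)`, so
summing a polynomial of degree `< 2(q - 1)` without constant term over `𝔽_q` gives minus its
coefficient of `X^(q-1)`. Substituting `x ↦ x⁻¹` and using `x^(2(p-1)) = 1` turns the summand into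
`x^(p-1-M) (1 + a x)^m (1 + b x)^n`, whose coefficient of `X^(p-1)` is the coefficient of `X^M` in
`(1 + a X)^m (1 + b X)^n`: the binomial convolution on the right-hand side.
-/

open Finset Polynomial

theorem ZMod.sum_range_natCast {p : ℕ} [NeZero p] {β : Type*} [AddCommMonoid β]
    (f : ZMod p → β) : ∑ k ∈ range p, f k = ∑ x : ZMod p, f x :=
  sum_nbij' (↑) ZMod.val (fun _ _ => mem_univ _) (fun x _ => mem_range.2 x.val_lt)
    (fun _ hk => ZMod.val_cast_of_lt (mem_range.1 hk)) (fun x _ => ZMod.natCast_zmod_val x)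
    (fun _ _ => rfl)

namespace FiniteField

variable {K : Type*} [Field K] [Fintype K]

local notation "q" => Fintype.card K

theorem sum_pow_of_pos_of_lt_two_mul {t : ℕ} (ht0 : 0 < t) (ht : t < 2 * (q - 1)) :
    ∑ x : K, x ^ t = if t = q - 1 then -1 else 0 := by
  classical
  have hunits : ∑ x : K, x ^ t = ∑ x : Kˣ, (x ^ t : K) := by
    calc ∑ x : K, x ^ t = ∑ x ∈ univ.erase 0, x ^ t := (sum_erase _ (zero_pow ht0.ne')).symm
      _ = ∑ x : {x : K // x ≠ 0}, (x : K) ^ t := sum_subtype _ (by simp) _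
      _ = ∑ u : Kˣ, (u : K) ^ t := (Fintype.sum_equiv unitsEquivNeZero _ _ fun _ => rfl).symm
  have hdvd : q - 1 ∣ t ↔ t = q - 1 := by
    refine ⟨fun ⟨c, hc⟩ => ?_, fun h => h ▸ dvd_rfl⟩
    have : c < 2 := by nlinarith
    interval_cases c <;> omega
  rw [hunits, sum_pow_units]
  exact if_congr hdvd rfl rfl

theorem sum_eval_eq_neg_coeff {f : K[X]} (hf0 : f.coeff 0 = 0)
    (hf : f.natDegree < 2 * (q - 1)) : ∑ x : K, f.eval x = -f.coeff (q - 1) := by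
  have hq : 1 < q := Fintype.one_lt_card
  simp_rw [eval_eq_sum_range' hf]
  rw [sum_comm]
  simp_rw [← mul_sum]
  have hterm : ∀ k ∈ range (2 * (q - 1)),
      f.coeff k * ∑ x : K, x ^ k = if k = q - 1 then -f.coeff k else 0 := by
    intro k hk
    rcases Nat.eq_zero_or_pos k with rfl | hk0
    · rw [hf0, zero_mul, if_neg (by omega)]
    · rw [sum_pow_of_pos_of_lt_two_mul hk0 (mem_range.1 hk)]
      split_ifs <;> simp
  rw [sum_congr rfl hterm, sum_ite_eq', if_pos (mem_range.2 (by omega))]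

theorem sum_add_pow_mul_add_pow_mul_pow_eq (a b : K) {m n s e : ℕ} (hs : 0 < s) (he : 0 < e)
    (hdvd : q - 1 ∣ m + n + s + e) :
    ∑ x : K, (a + x) ^ m * (b + x) ^ n * x ^ s =
      ∑ x : K, x ^ e * (1 + a * x) ^ m * (1 + b * x) ^ n := by
  rw [← Equiv.sum_comp (Equiv.inv K)]
  refine sum_congr rfl fun x _ => ?_
  rcases eq_or_ne x 0 with rfl | hx
  · simp [zero_pow hs.ne', zero_pow he.ne']
  obtain ⟨c, hc⟩ := hdvd
  have hone : x ^ (m + n + s + e) = 1 := by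
    rw [hc, pow_mul, pow_card_sub_one_eq_one x hx, one_pow]
  have hinv : x⁻¹ ^ (m + n + s) = x ^ e := by
    rw [inv_pow, eq_comm]
    exact eq_inv_of_mul_eq_one_left (by rw [← pow_add, ← hone]; ring_nf)
  have hshift : ∀ c : K, c + x⁻¹ = x⁻¹ * (1 + c * x) := fun c => by field_simp; ring
  rw [Equiv.inv_apply, hshift a, hshift b, mul_pow, mul_pow, ← hinv, pow_add, pow_add]
  ring

end FiniteField

namespace Polynomial

variable {R : Type*} [CommSemiring R]

theorem coeff_one_add_C_mul_X_pow (a : R) (m k : ℕ) :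
    ((1 + C a * X) ^ m).coeff k = m.choose k * a ^ k := by
  have hcomp : (1 + C a * X) ^ m = ((1 + X) ^ m).comp (C a * X) := by simp
  rw [hcomp, comp_C_mul_X_coeff, coeff_one_add_X_pow]

theorem coeff_one_add_C_mul_X_pow_mul_one_add_C_mul_X_pow (a b : R) (m n M : ℕ) :
    ((1 + C a * X) ^ m * (1 + C b * X) ^ n).coeff M =
      ∑ j ∈ range (M + 1), (m.choose (M - j) : R) * n.choose j * a ^ (M - j) * b ^ j := by
  rw [coeff_mul, ← Nat.sum_antidiagonal_swap]
  simp only [Prod.fst_swap, Prod.snd_swap]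
  refine (Nat.sum_antidiagonal_eq_sum_range_succ
    (fun j i => ((1 + C a * X) ^ m).coeff i * ((1 + C b * X) ^ n).coeff j) M).trans ?_
  simp only [coeff_one_add_C_mul_X_pow]
  exact sum_congr rfl fun j _ => by ring

end Polynomial

theorem triple_product_mid_general (p a b m n s M : ℕ) (hp : p.Prime)
    (hs : 1 ≤ s ∧ s ≤ p - 1) (h2 : m + n + s < 2 * (p - 1))
    (hM : (M : ℤ) = (m : ℤ) + n + s - ((p : ℤ) - 1)) :
    (∑ k ∈ Finset.range p,
        ((a : ZMod p) + (k : ZMod p)) ^ m * ((b : ZMod p) + (k : ZMod p)) ^ n *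
          (k : ZMod p) ^ s) =
      -∑ j ∈ Finset.range (M + 1),
          (m.choose (M - j) : ZMod p) * (n.choose j : ZMod p) *
            (a : ZMod p) ^ (M - j) * (b : ZMod p) ^ j := by
  have := Fact.mk hp
  have hMp : M + (p - 1) = m + n + s := by have := hp.one_lt; omega
  set e := p - 1 - M
  set P : (ZMod p)[X] := X ^ e * ((1 + C (a : ZMod p) * X) ^ m * (1 + C (b : ZMod p) * X) ^ n)
  have hdvd : Fintype.card (ZMod p) - 1 ∣ m + n + s + e := ⟨2, by rw [ZMod.card]; omega⟩
  rw [ZMod.sum_range_natCast fun x : ZMod p => (a + x) ^ m * (b + x) ^ n * x ^ s,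
    FiniteField.sum_add_pow_mul_add_pow_mul_pow_eq _ _ hs.1 (by omega) hdvd]
  have hP : ∀ x : ZMod p, x ^ e * (1 + a * x) ^ m * (1 + b * x) ^ n = P.eval x := by
    simp [P, mul_assoc]
  have hP0 : P.coeff 0 = 0 := by simp only [P]; rw [coeff_X_pow_mul', if_neg (by omega)]
  have hPdeg : P.natDegree < 2 * (Fintype.card (ZMod p) - 1) := by
    have : P.natDegree ≤ e + (m + n) := by simp only [P]; compute_degree
    rw [ZMod.card]; omega
  simp_rw [hP]
  rw [FiniteField.sum_eval_eq_neg_coeff hP0 hPdeg, ZMod.card, coeff_X_pow_mul', if_pos (by omega),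
    show p - 1 - e = M by omega, coeff_one_add_C_mul_X_pow_mul_one_add_C_mul_X_pow]

theorem triple_product_mid (p a b m n s M : ℕ) (hp : p.Prime)
    (ha : 1 ≤ a ∧ a ≤ p - 1) (hb : 1 ≤ b ∧ b ≤ p - 1) (hab : a ≠ b)
    (hm : 1 ≤ m ∧ m ≤ p - 1) (hn : 1 ≤ n ∧ n ≤ p - 1) (hs : 1 ≤ s ∧ s ≤ p - 1)
    (h1 : p - 1 ≤ m + n + s) (h2 : m + n + s < 2 * (p - 1))
    (hM : (M : ℤ) = (m : ℤ) + n + s - ((p : ℤ) - 1)) :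
    (∑ k ∈ Finset.range p,
        ((a : ZMod p) + (k : ZMod p)) ^ m * ((b : ZMod p) + (k : ZMod p)) ^ n *
          (k : ZMod p) ^ s) =
      -∑ j ∈ Finset.range (M + 1),
          (m.choose (M - j) : ZMod p) * (n.choose j : ZMod p) *
            (a : ZMod p) ^ (M - j) * (b : ZMod p) ^ j :=
  triple_product_mid_general p a b m n s M hp hs h2 hM
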